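/- arXiv:2303.16816 — 2 statements merged into one kernel-verified Lean document; each statement's English description precedes it below -/
import Mathlib

section
/- If z is a standard Gaussian random vector in R^m (i.e., z ~ N(0, I_m)), then for every natural number r, the square of the r-th moment of its Euclidean norm satisfies E[‖z‖₂^r]² ≤ 4·(m+r-1)!. -/
/-!
Write `S = ‖z‖₂²`. By Cauchy–Schwarz, `E[S^(r/2)]² ≤ E[S^a] · E[S^b]` with `a = ⌊r/2⌋`,
`b = ⌈r/2⌉`. The chi-squared moments are `E[S^k] = m (m + 2) ⋯ (m + 2k - 2)`: by induction on `m`,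
from the one-dimensional moments `E[x^(2j)] = 1 · 3 ⋯ (2j - 1)` (integration by parts against the
Gaussian density) and the binomial theorem. Since `a` and `b` differ by at most one, the factors
of `E[S^a]` and `E[S^b]` interleave below those of `m (m + 1) ⋯ (m + r - 1) ≤ (m + r - 1)!`.
-/

open MeasureTheory ProbabilityTheory Finset Real
open scoped ENNReal NNReal Nat

def chiSqMoment (m k : ℕ) : ℕ := ∏ i ∈ range k, (m + 2 * i)

@[simp]
lemma chiSqMoment_zero_right (m : ℕ) : chiSqMoment m 0 = 1 := rfl

lemma chiSqMoment_succ (m k : ℕ) : chiSqMoment m (k + 1) = (m + 2 * k) * chiSqMoment m k := by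
  rw [chiSqMoment, prod_range_succ, mul_comm]; rfl

lemma chiSqMoment_zero_left (k : ℕ) : chiSqMoment 0 k = 0 ^ k := by
  cases k with
  | zero => rfl
  | succ k => exact prod_eq_zero (mem_range.2 k.succ_pos) rfl

lemma sum_antidiagonal_choose_mul_chiSqMoment (a b k : ℕ) :
    ∑ ij ∈ antidiagonal k, k.choose ij.1 * (chiSqMoment a ij.1 * chiSqMoment b ij.2)
      = chiSqMoment (a + b) k := by
  induction k with
  | zero => simp
  | succ k ih =>
    have hsplit := sum_antidiagonal_choose_succ_mul (R := ℕ)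
      (fun i j => chiSqMoment a i * chiSqMoment b j) k
    simp only [Nat.cast_id] at hsplit
    rw [hsplit, chiSqMoment_succ, ← ih, mul_sum, ← sum_add_distrib]
    refine sum_congr rfl fun ij hij => ?_
    rw [HasAntidiagonal.mem_antidiagonal] at hij
    rw [← hij, Nat.choose_symm_add, chiSqMoment_succ, chiSqMoment_succ]
    ring

lemma chiSqMoment_mul_le_ascFactorial (m a : ℕ) {b : ℕ} (hb : b = a ∨ b = a + 1) :
    chiSqMoment m a * chiSqMoment m b ≤ m.ascFactorial (a + b) := by
  induction a generalizing b with
  | zero => rcases hb with rfl | rfl <;> simp [chiSqMoment_succ, Nat.ascFactorial_succ]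
  | succ a ih =>
    obtain ⟨c, rfl⟩ : ∃ c, b = c + 1 := ⟨b - 1, by omega⟩
    have hc : c = a ∨ c = a + 1 := by omega
    have hsplit : a + 1 + (c + 1) = a + c + 1 + 1 := by ring
    rw [chiSqMoment_succ, chiSqMoment_succ, hsplit, Nat.ascFactorial_succ, Nat.ascFactorial_succ]
    calc (m + 2 * a) * chiSqMoment m a * ((m + 2 * c) * chiSqMoment m c)
        = ((m + 2 * a) * (m + 2 * c)) * (chiSqMoment m a * chiSqMoment m c) := by ring
      _ ≤ ((m + (a + c)) * (m + (a + c + 1))) * m.ascFactorial (a + c) := by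
        gcongr
        · omega
        · omega
        · exact ih hc
      _ = _ := by ring

lemma Nat.ascFactorial_le_factorial_add_sub_one (n k : ℕ) : n.ascFactorial k ≤ (n + k - 1)! := by
  rcases Nat.eq_zero_or_pos n with rfl | hn
  · cases k <;> simp [Nat.zero_ascFactorial]
  · rw [← Nat.factorial_mul_ascFactorial' n k hn]
    exact Nat.le_mul_of_pos_left _ (Nat.factorial_pos _)

lemma gaussianPDFReal_zero_one (x : ℝ) :
    gaussianPDFReal 0 1 x = (√(2 * π))⁻¹ * exp (-(1 / 2) * x ^ 2) := by
  simp only [gaussianPDFReal_def, NNReal.coe_one, mul_one, sub_zero]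
  ring_nf

lemma hasDerivAt_gaussianPDFReal_zero_one (x : ℝ) :
    HasDerivAt (gaussianPDFReal 0 1) (-x * gaussianPDFReal 0 1 x) x := by
  have hexp := ((hasDerivAt_pow 2 x).const_mul (-(1 / 2) : ℝ)).exp.const_mul (√(2 * π))⁻¹
  simp only [← gaussianPDFReal_zero_one] at hexp
  refine hexp.congr_deriv ?_
  rw [gaussianPDFReal_zero_one]
  norm_num
  ring

lemma integrable_pow_mul_gaussianPDFReal (n : ℕ) :
    Integrable fun x : ℝ => x ^ n * gaussianPDFReal 0 1 x := by
  have h := (integrable_rpow_mul_exp_neg_mul_sq (b := 1 / 2) (by norm_num)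
    (s := n) (neg_one_lt_zero.trans_le n.cast_nonneg)).const_mul (√(2 * π))⁻¹
  refine h.congr (ae_of_all _ fun x => ?_)
  simp only [rpow_natCast, gaussianPDFReal_zero_one]
  ring

lemma integral_pow_add_two_gaussianReal (n : ℕ) :
    ∫ x, x ^ (n + 2) ∂gaussianReal 0 1 = (n + 1) * ∫ x, x ^ n ∂gaussianReal 0 1 := by
  simp only [integral_gaussianReal_eq_integral_smul one_ne_zero, smul_eq_mul]
  have hderiv (x : ℝ) : HasDerivAt (fun x => x ^ (n + 1) * gaussianPDFReal 0 1 x)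
      ((n + 1) * (gaussianPDFReal 0 1 x * x ^ n) - gaussianPDFReal 0 1 x * x ^ (n + 2)) x := by
    refine ((hasDerivAt_pow (n + 1) x).mul (hasDerivAt_gaussianPDFReal_zero_one x)).congr_deriv ?_
    push_cast
    ring
  have hint (k : ℕ) : Integrable fun x => gaussianPDFReal 0 1 x * x ^ k := by
    simpa only [mul_comm] using integrable_pow_mul_gaussianPDFReal k
  have hzero := integral_eq_zero_of_hasDerivAt_of_integrable hderiv
    (((hint n).const_mul _).sub (hint (n + 2))) (integrable_pow_mul_gaussianPDFReal (n + 1))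
  rw [integral_sub ((hint n).const_mul _) (hint (n + 2)), integral_const_mul] at hzero
  linarith

lemma integral_pow_two_mul_gaussianReal (j : ℕ) :
    ∫ x, x ^ (2 * j) ∂gaussianReal 0 1 = chiSqMoment 1 j := by
  induction j with
  | zero => simp
  | succ j ih =>
    rw [mul_add, mul_one, integral_pow_add_two_gaussianReal, ih, chiSqMoment_succ]
    push_cast; ring

lemma lintegral_ofReal_sq_pow_gaussianReal (j : ℕ) :
    ∫⁻ x, ENNReal.ofReal (x ^ 2) ^ j ∂gaussianReal 0 1 = chiSqMoment 1 j := by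
  have hint : Integrable (fun x : ℝ => x ^ (2 * j)) (gaussianReal 0 1) := by
    have h := (memLp_id_gaussianReal' (μ := 0) (v := 1) (2 * j : ℕ)
      (ENNReal.natCast_ne_top _)).integrable_norm_pow'
    simpa only [id, norm_pow, norm_eq_abs, (even_two_mul j).pow_abs] using h
  have hnonneg : 0 ≤ᵐ[gaussianReal 0 1] fun x : ℝ => x ^ (2 * j) :=
    ae_of_all _ fun x => (even_two_mul j).pow_nonneg x
  simp_rw [← ENNReal.ofReal_pow (sq_nonneg _), ← pow_mul]
  rw [← ofReal_integral_eq_lintegral_ofReal hint hnonneg, integral_pow_two_mul_gaussianReal,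
    ENNReal.ofReal_natCast]

lemma lintegral_ofReal_sum_sq_pow_pi_gaussianReal (m k : ℕ) :
    ∫⁻ x, ENNReal.ofReal (∑ i, x i ^ 2) ^ k ∂(Measure.pi fun _ : Fin m => gaussianReal 0 1)
      = chiSqMoment m k := by
  induction m generalizing k with
  | zero => simp [chiSqMoment_zero_left]
  | succ m ih =>
    have hsplit (x : Fin (m + 1) → ℝ) : ENNReal.ofReal (∑ i, x i ^ 2) ^ k
        = (fun p : ℝ × (Fin m → ℝ) =>
            (ENNReal.ofReal (p.1 ^ 2) + ENNReal.ofReal (∑ i, p.2 i ^ 2)) ^ k)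
          (MeasurableEquiv.piFinSuccAbove (fun _ => ℝ) 0 x) := by
      rw [Fin.sum_univ_succ,
        ENNReal.ofReal_add (sq_nonneg _) (sum_nonneg fun i _ => sq_nonneg (x _))]
      rfl
    have hG : Measurable fun p : ℝ × (Fin m → ℝ) =>
        (ENNReal.ofReal (p.1 ^ 2) + ENNReal.ofReal (∑ i, p.2 i ^ 2)) ^ k := by fun_prop
    rw [lintegral_congr hsplit,
      (measurePreserving_piFinSuccAbove (fun _ => gaussianReal 0 1) 0).lintegral_comp hG]
    have hbinom (a b : ℝ≥0∞) := (Commute.all a b).add_pow' k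
    simp_rw [hbinom, nsmul_eq_mul]
    rw [lintegral_finsetSum _ (fun _ _ => by fun_prop), add_comm m 1,
      ← sum_antidiagonal_choose_mul_chiSqMoment, Nat.cast_sum]
    refine sum_congr rfl fun ij _ => ?_
    rw [lintegral_const_mul _ (by fun_prop),
      lintegral_prod_mul (f := fun t : ℝ => ENNReal.ofReal (t ^ 2) ^ ij.1)
        (g := fun y : Fin m → ℝ => ENNReal.ofReal (∑ i, y i ^ 2) ^ ij.2) (by fun_prop)
        (Measurable.aemeasurable (by fun_prop)),
      lintegral_ofReal_sq_pow_gaussianReal, ih]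
    norm_cast

lemma lintegral_pow_add_sq_le {α : Type*} [MeasurableSpace α] (μ : Measure α) {f : α → ℝ≥0∞}
    (hf : AEMeasurable f μ) (a b : ℕ) :
    (∫⁻ x, f x ^ (a + b) ∂μ) ^ 2 ≤ (∫⁻ x, f x ^ (2 * a) ∂μ) * ∫⁻ x, f x ^ (2 * b) ∂μ := by
  have hsq (c : ℕ) (x : α) : (f x ^ c) ^ (2 : ℝ) = f x ^ (2 * c) := by
    rw [ENNReal.rpow_two, ← pow_mul, mul_comm]
  have hsqrt (y : ℝ≥0∞) : (y ^ (1 / 2 : ℝ)) ^ 2 = y := by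
    rw [← ENNReal.rpow_natCast, ← ENNReal.rpow_mul]; norm_num
  have hholder := ENNReal.lintegral_mul_le_Lp_mul_Lq μ Real.HolderConjugate.two_two
    (hf.pow_const a) (hf.pow_const b)
  simp only [Pi.mul_apply, ← pow_add, hsq] at hholder
  calc (∫⁻ x, f x ^ (a + b) ∂μ) ^ 2
      ≤ ((∫⁻ x, f x ^ (2 * a) ∂μ) ^ (1 / 2 : ℝ) * (∫⁻ x, f x ^ (2 * b) ∂μ) ^ (1 / 2 : ℝ)) ^ 2 := by
        gcongr
    _ = _ := by rw [mul_pow, hsqrt, hsqrt]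

lemma lintegral_sqrt_sum_sq_pow_sq_le (m r : ℕ) :
    (∫⁻ x, ENNReal.ofReal √(∑ i, x i ^ 2) ^ r ∂(Measure.pi fun _ : Fin m => gaussianReal 0 1)) ^ 2
      ≤ (m + r - 1)! := by
  have hsq (c : ℕ) (x : Fin m → ℝ) :
      ENNReal.ofReal √(∑ i, x i ^ 2) ^ (2 * c) = ENNReal.ofReal (∑ i, x i ^ 2) ^ c := by
    rw [pow_mul, ← ENNReal.ofReal_pow (sqrt_nonneg _), sq_sqrt (sum_nonneg fun i _ => sq_nonneg _)]
  -- A balanced split: `E[S^k]` grows like `2^k k!`, so an unbalanced one would lose the bound.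
  have hr : r / 2 + (r - r / 2) = r := by omega
  calc _ = (∫⁻ x, ENNReal.ofReal √(∑ i, x i ^ 2) ^ (r / 2 + (r - r / 2))
        ∂(Measure.pi fun _ : Fin m => gaussianReal 0 1)) ^ 2 := by rw [hr]
    _ ≤ _ := lintegral_pow_add_sq_le _ (Measurable.aemeasurable (by fun_prop)) _ _
    _ = ((chiSqMoment m (r / 2) * chiSqMoment m (r - r / 2) : ℕ) : ℝ≥0∞) := by
      simp only [hsq, lintegral_ofReal_sum_sq_pow_pi_gaussianReal, Nat.cast_mul]
    _ ≤ (m + r - 1)! := by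
      gcongr
      calc _ ≤ m.ascFactorial (r / 2 + (r - r / 2)) :=
            chiSqMoment_mul_le_ascFactorial m _ (by omega)
        _ ≤ (m + r - 1)! := by rw [hr]; exact Nat.ascFactorial_le_factorial_add_sub_one m r

theorem gaussian_norm_moment_sq_le_general {m : ℕ} {Ω : Type*} [MeasurableSpace Ω]
    (μ : Measure Ω) (z : Ω → Fin m → ℝ)
    (hz : Measure.map z μ = Measure.pi fun _ : Fin m => gaussianReal 0 1) (r : ℕ) :
    (∫ ω, (Real.sqrt (∑ i, (z ω i) ^ 2)) ^ r ∂μ) ^ 2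
      ≤ 4 * (Nat.factorial (m + r - 1) : ℝ) := by
  have hzm : AEMeasurable z μ := aemeasurable_of_map_neZero (by rw [hz]; infer_instance)
  have hmoment : ∫ ω, √(∑ i, z ω i ^ 2) ^ r ∂μ = (∫⁻ x, ENNReal.ofReal √(∑ i, x i ^ 2) ^ r
      ∂(Measure.pi fun _ : Fin m => gaussianReal 0 1)).toReal := by
    rw [← integral_map (f := fun x : Fin m → ℝ => √(∑ i, x i ^ 2) ^ r) hzm
        (Measurable.aestronglyMeasurable (by fun_prop)), hz,
      integral_eq_lintegral_of_nonneg_ae (ae_of_all _ fun x => by positivity)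
        (Measurable.aestronglyMeasurable (by fun_prop))]
    simp only [ENNReal.ofReal_pow (sqrt_nonneg _)]
  rw [hmoment, ← ENNReal.toReal_pow]
  calc _ ≤ ((m + r - 1)! : ℝ) := by
        simpa using ENNReal.toReal_mono (ENNReal.natCast_ne_top _)
          (lintegral_sqrt_sum_sq_pow_sq_le m r)
    _ ≤ _ := le_mul_of_one_le_left (by positivity) (by norm_num)

/-- If `z` is a standard Gaussian random vector in `ℝ^m` (law equal to the product of
`m` standard real Gaussians), then for every natural number `r` the square of the `r`-th
moment of its Euclidean norm satisfies `E[‖z‖₂^r]² ≤ 4·(m+r-1)!`. -/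
theorem gaussian_norm_moment_sq_le {m : ℕ} {Ω : Type*} [MeasurableSpace Ω]
    (μ : Measure Ω) [IsProbabilityMeasure μ] (z : Ω → Fin m → ℝ)
    (hz : Measure.map z μ = Measure.pi fun _ : Fin m => gaussianReal 0 1) (r : ℕ) :
    (∫ ω, (Real.sqrt (∑ i, (z ω i) ^ 2)) ^ r ∂μ) ^ 2
      ≤ 4 * (Nat.factorial (m + r - 1) : ℝ) :=
  gaussian_norm_moment_sq_le_general μ z hz r
end

section
/- PAC-Bayesian bound via Donsker–Varadhan: Let F be a measurable space of hypotheses with a prior probability density π, and let X(f), Y(f) be real-valued measurable functions of f and the sample such that E_{f∼π} E[e^{λ(X(f)−Y(f))}] = e^{Ψ} < ∞. Then for any δ ∈ (0,1], with probability at least 1−δ, simultaneously for all probability densities ρ absolutely continuous with respect to π: E_{f∼ρ}[X(f)] ≤ E_{f∼ρ}[Y(f)] + (1/λ)(KL(ρ‖π) + ln(1/δ) + Ψ). -/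
/-!
Donsker–Varadhan: tilting `π` by `e^g` gives a probability measure `π_g`, and Gibbs' inequality
`KL(ρ‖π_g) ≥ 0` unfolds to `E_ρ g ≤ KL(ρ‖π) + ln E_π e^g`, for all `ρ` simultaneously.
With `g = λ(X − Y)(·, ω)` the only randomness left is `Z ω = E_π e^{g}`, whose mean is `e^Ψ`
by Fubini, so Markov's inequality (the Chernoff step) gives `Z < e^Ψ / δ` with probability
at least `1 − δ`.
-/

open MeasureTheory

/-- Kullback–Leibler divergence `KL(ρ‖π) = E_{f∼ρ}[ln (dρ/dπ)(f)]`. -/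
noncomputable def klDivergence {F : Type*} [MeasurableSpace F] (ρ π : Measure F) : ℝ :=
  ∫ f, Real.log ((ρ.rnDeriv π f).toReal) ∂ρ

open InformationTheory

section

variable {α : Type*} [MeasurableSpace α] {ρ π : Measure α}
  [IsProbabilityMeasure ρ] [IsProbabilityMeasure π]

theorem integral_le_klDivergence_add_log_integral_exp (hρπ : ρ ≪ π) {g : α → ℝ}
    (hg : Integrable g ρ) (hexp : Integrable (fun x ↦ Real.exp (g x)) π)
    (hllr : Integrable (llr ρ π) ρ) :
    ∫ x, g x ∂ρ ≤ klDivergence ρ π + Real.log (∫ x, Real.exp (g x) ∂π) := by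
  have := isProbabilityMeasure_tilted hexp
  -- Gibbs' inequality for `ρ` against the Gibbs measure `π.tilted g`
  have gibbs := integral_llr_add_sub_measure_univ_nonneg
    (hρπ.trans (absolutelyContinuous_tilted hexp)) (integrable_llr_tilted_right hρπ hg hllr hexp)
  rw [integral_llr_tilted_right hρπ hg hexp hllr] at gibbs
  simp only [probReal_univ, llr_def] at gibbs
  unfold klDivergence
  linarith

theorem integral_le_integral_add_of_log_integral_exp_le (hρπ : ρ ≪ π) {x y : α → ℝ}
    {lam B : ℝ} (hlam : 0 < lam) (hx : Integrable x ρ) (hy : Integrable y ρ)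
    (hexp : Integrable (fun f ↦ Real.exp (lam * (x f - y f))) π) (hllr : Integrable (llr ρ π) ρ)
    (hB : Real.log (∫ f, Real.exp (lam * (x f - y f)) ∂π) ≤ B) :
    ∫ f, x f ∂ρ ≤ ∫ f, y f ∂ρ + (1 / lam) * (klDivergence ρ π + B) := by
  have hDV := integral_le_klDivergence_add_log_integral_exp hρπ
    (g := fun f ↦ lam * (x f - y f)) ((hx.sub hy).const_mul lam) hexp hllr
  rw [integral_const_mul, integral_sub hx hy] at hDV
  rw [← sub_le_iff_le_add', one_div_mul_eq_div, le_div_iff₀' hlam]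
  linarith

end

theorem ofReal_one_sub_le_measure_lt_integral_div {Ω : Type*} [MeasurableSpace Ω]
    {μ : Measure Ω} [IsProbabilityMeasure μ] {Z : Ω → ℝ} (hZ : 0 ≤ᵐ[μ] Z)
    (hint : Integrable Z μ) (hpos : 0 < ∫ ω, Z ω ∂μ) {δ : ℝ} (hδ : 0 < δ) :
    ENNReal.ofReal (1 - δ) ≤ μ {ω | Z ω < (∫ ω, Z ω ∂μ) / δ} := by
  set a := (∫ ω, Z ω ∂μ) / δ
  have markov : μ {ω | a ≤ Z ω} ≤ ENNReal.ofReal δ := by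
    rw [ENNReal.le_ofReal_iff_toReal_le (measure_ne_top μ _) hδ.le, ← measureReal_def,
      ← mul_le_mul_iff_right₀ (div_pos hpos hδ), div_mul_cancel₀ _ hδ.ne']
    exact mul_meas_ge_le_integral_of_nonneg hZ hint a
  have hcompl : {ω | Z ω < a} = {ω | a ≤ Z ω}ᶜ := by
    ext; simp
  rw [ENNReal.ofReal_sub _ hδ.le, ENNReal.ofReal_one, hcompl, tsub_le_iff_right,
    ← measure_univ (μ := μ), add_comm]
  exact (measure_univ_le_add_compl _).trans (add_le_add_left markov _)

theorem pac_bayes_bound_general {F Ω : Type*} [MeasurableSpace F] [MeasurableSpace Ω]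
    (μ : Measure Ω) [IsProbabilityMeasure μ]
    (π : Measure F) [IsProbabilityMeasure π]
    (X Y : F → Ω → ℝ)
    (lam : ℝ) (hlam : 0 < lam) (Ψ : ℝ)
    (hintmgf : Integrable
      (fun p : F × Ω => Real.exp (lam * (X p.1 p.2 - Y p.1 p.2))) (π.prod μ))
    (hmgf : ∫ f, ∫ ω, Real.exp (lam * (X f ω - Y f ω)) ∂μ ∂π = Real.exp Ψ)
    (δ : ℝ) (hδ : δ ∈ Set.Ioc (0 : ℝ) 1) :
    ENNReal.ofReal (1 - δ) ≤
      μ {ω | ∀ ρ : Measure F, IsProbabilityMeasure ρ → ρ ≪ π →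
        Integrable (fun f => X f ω) ρ → Integrable (fun f => Y f ω) ρ →
        Integrable (fun f => Real.log ((ρ.rnDeriv π f).toReal)) ρ →
        ∫ f, X f ω ∂ρ ≤ ∫ f, Y f ω ∂ρ
          + (1 / lam) * (klDivergence ρ π + Real.log (1 / δ) + Ψ)} := by
  set Z : Ω → ℝ := fun ω ↦ ∫ f, Real.exp (lam * (X f ω - Y f ω)) ∂π
  have hZ_mean : ∫ ω, Z ω ∂μ = Real.exp Ψ := (integral_integral_swap hintmgf).symm.trans hmgf
  have hZ_nonneg : 0 ≤ᵐ[μ] Z := ae_of_all _ fun ω ↦ integral_nonneg fun f ↦ (Real.exp_pos _).le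
  refine (ofReal_one_sub_le_measure_lt_integral_div hZ_nonneg hintmgf.swap.integral_prod_left
    (hZ_mean ▸ Real.exp_pos Ψ) hδ.1).trans (measure_mono_ae ?_)
  filter_upwards [hintmgf.prod_left_ae] with ω hexp hmarkov ρ _ hρπ hX hY hllr
  rw [add_assoc]
  refine integral_le_integral_add_of_log_integral_exp_le hρπ hlam hX hY hexp hllr ?_
  have hZω : Z ω < Real.exp (Real.log (1 / δ) + Ψ) := by
    rwa [Real.exp_add, Real.exp_log (one_div_pos.2 hδ.1), one_div_mul_eq_div, ← hZ_mean]
  exact ((Real.log_lt_iff_lt_exp (integral_exp_pos hexp)).2 hZω).le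

/-- PAC-Bayesian bound via Donsker–Varadhan: if
`E_{f∼π} E[e^{λ(X(f)−Y(f))}] = e^Ψ < ∞`, then for any `δ ∈ (0,1]`, with probability at
least `1−δ`, simultaneously for all probability measures `ρ ≪ π`:
`E_{f∼ρ}[X(f)] ≤ E_{f∼ρ}[Y(f)] + (1/λ)(KL(ρ‖π) + ln(1/δ) + Ψ)`. -/
theorem pac_bayes_bound {F Ω : Type*} [MeasurableSpace F] [MeasurableSpace Ω]
    (μ : Measure Ω) [IsProbabilityMeasure μ]
    (π : Measure F) [IsProbabilityMeasure π]
    (X Y : F → Ω → ℝ)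
    (hX : Measurable (Function.uncurry X)) (hY : Measurable (Function.uncurry Y))
    (lam : ℝ) (hlam : 0 < lam) (Ψ : ℝ)
    (hintmgf : Integrable
      (fun p : F × Ω => Real.exp (lam * (X p.1 p.2 - Y p.1 p.2))) (π.prod μ))
    (hmgf : ∫ f, ∫ ω, Real.exp (lam * (X f ω - Y f ω)) ∂μ ∂π = Real.exp Ψ)
    (δ : ℝ) (hδ : δ ∈ Set.Ioc (0 : ℝ) 1) :
    ENNReal.ofReal (1 - δ) ≤
      μ {ω | ∀ ρ : Measure F, IsProbabilityMeasure ρ → ρ ≪ π →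
        Integrable (fun f => X f ω) ρ → Integrable (fun f => Y f ω) ρ →
        Integrable (fun f => Real.log ((ρ.rnDeriv π f).toReal)) ρ →
        ∫ f, X f ω ∂ρ ≤ ∫ f, Y f ω ∂ρ
          + (1 / lam) * (klDivergence ρ π + Real.log (1 / δ) + Ψ)} :=
  pac_bayes_bound_general μ π X Y lam hlam Ψ hintmgf hmgf δ hδ
end
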